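/- arXiv:1404.1149 — 4 statements merged into one kernel-verified Lean document; each statement's English description precedes it below -/
import Mathlib

section
/- Let g be a restricted Lie algebra over a field k of characteristic p > 0, and let b be a Lie subalgebra of g that is maximal among solvable Lie subalgebras of g. Then b is a restricted (p-closed) subalgebra of g, i.e. b is closed under the p-operation of g. -/
/-!
For `x ∈ b`, the `p`-operation satisfies `ad (x^[p]) = (ad x)^p`: in the associative envelope
`ad a = L_a - R_a` with `L_a` and `R_a` commuting, so `(ad a)^p = L_a^p - R_a^p = ad (a^p)`
in characteristic `p`. Hence `x^[p]` normalizes `b`. On the other hand a maximal solvable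
subalgebra is self-normalizing: for `n` in the normalizer, `b + k n` is a subalgebra whose
derived algebra lies in `b`, so it is solvable and equals `b` by maximality.
-/

attribute [local instance 100] LieRing.ofAssociativeRing

open LieAlgebra

theorem LieAlgebra.ad_pow_char {p : ℕ} [hp : Fact p.Prime] {R A : Type*} [CommRing R]
    [CharP R p] [Ring A] [Algebra R A] (a : A) : ad R A (a ^ p) = ad R A a ^ p := by
  rcases subsingleton_or_nontrivial A with _ | _
  · exact Subsingleton.elim _ _
  have : CharP (Module.End R A) p := (CharP.charP_iff_prime_eq_zero hp.out).2 <| by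
    rw [← map_natCast (algebraMap R (Module.End R A)), CharP.cast_eq_zero, map_zero]
  rw [ad_eq_lmul_left_sub_lmul_right, Pi.sub_apply, Pi.sub_apply,
    sub_pow_char_of_commute p (LinearMap.commute_mulLeft_right a a),
    LinearMap.pow_mulLeft, LinearMap.pow_mulRight]

namespace LieHom

variable {R L : Type*} [CommRing R] [LieRing L] [LieAlgebra R L]

theorem map_ad_pow_apply {L' : Type*} [LieRing L'] [LieAlgebra R L'] (f : L →ₗ⁅R⁆ L')
    (x y : L) (n : ℕ) : f ((ad R L x ^ n) y) = (ad R L' (f x) ^ n) (f y) := by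
  induction n with
  | zero => rfl
  | succ n ih =>
    rw [pow_succ', pow_succ', Module.End.mul_apply, Module.End.mul_apply, ad_apply, ad_apply,
      map_lie, ih]

theorem ad_eq_ad_pow_of_map_eq_pow {p : ℕ} [Fact p.Prime] [CharP R p] {A : Type*} [Ring A]
    [Algebra R A] (f : L →ₗ⁅R⁆ A) (hf : Function.Injective f) {x z : L} (h : f z = f x ^ p) :
    ad R L z = ad R L x ^ p := by
  ext y
  apply hf
  rw [ad_apply, map_lie, h, ← ad_apply R, ad_pow_char, map_ad_pow_apply]

end LieHom

section Solvable

variable {R L : Type*} [CommRing R] [LieRing L] [LieAlgebra R L]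

theorem LieAlgebra.isSolvable_of_derivedSeries_le (I : LieIdeal R L) [IsSolvable I] {n : ℕ}
    (h : derivedSeries R L n ≤ I) : IsSolvable L := by
  obtain ⟨m, hm⟩ := IsSolvable.solvable R I
  rw [LieIdeal.derivedSeries_eq_bot_iff] at hm
  refine (isSolvable_iff R L).2 ⟨m + n, eq_bot_iff.2 ?_⟩
  rw [derivedSeries_def, derivedSeriesOfIdeal_add, ← hm]
  exact derivedSeriesOfIdeal_mono h m

namespace LieSubalgebra

variable {H : LieSubalgebra R L} {x : L}

theorem isSolvable_of_lie_mem {K : LieSubalgebra R L} [IsSolvable H]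
    (hK : ∀ y ∈ K, ∀ z ∈ K, ⁅y, z⁆ ∈ H) : IsSolvable K := by
  let J := derivedSeries R K 1
  have hJ : ∀ y : J, K.incl (J.incl y) ∈ H := by
    suffices (J : Submodule R K) ≤ H.toSubmodule.comap K.incl.toLinearMap from fun y => this y.2
    rw [coe_derivedSeries_one_eq, Submodule.span_le]
    rintro _ ⟨y, z, rfl⟩
    exact hK _ y.2 _ z.2
  let f : J →ₗ⁅R⁆ H :=
    { toFun y := ⟨_, hJ y⟩
      map_add' _ _ := rfl
      map_smul' _ _ := rfl
      map_lie' := rfl }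
  have hf : Function.Injective f := fun y z h =>
    Subtype.ext <| Subtype.ext (congrArg ((↑) : H → L) h)
  have := hf.lieAlgebra_isSolvable
  exact isSolvable_of_derivedSeries_le J le_rfl

theorem lie_mem_of_mem_sup_of_mem_normalizer (hx : x ∈ H.normalizer) {y z : L}
    (hy : y ∈ R ∙ x ⊔ H.toSubmodule) (hz : z ∈ R ∙ x ⊔ H.toSubmodule) : ⁅y, z⁆ ∈ H := by
  obtain ⟨_, hs, v, hv, rfl⟩ := Submodule.mem_sup.1 hy
  obtain ⟨_, ht, w, hw, rfl⟩ := Submodule.mem_sup.1 hz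
  obtain ⟨s, rfl⟩ := Submodule.mem_span_singleton.1 hs
  obtain ⟨t, rfl⟩ := Submodule.mem_span_singleton.1 ht
  simp only [add_lie, lie_add, smul_lie, lie_smul, lie_self, smul_zero, zero_add]
  exact H.add_mem (H.smul_mem t ((H.mem_normalizer_iff' x).1 hx v hv))
    (H.add_mem (H.smul_mem s ((H.mem_normalizer_iff x).1 hx w hw)) (H.lie_mem hv hw))

theorem exists_isSolvable_of_mem_normalizer [IsSolvable H] (hx : x ∈ H.normalizer) :
    ∃ K : LieSubalgebra R L, IsSolvable K ∧ H ≤ K ∧ x ∈ K := by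
  let K : LieSubalgebra R L :=
    { R ∙ x ⊔ H.toSubmodule with
      lie_mem' := fun hy hz =>
        Submodule.mem_sup_right (lie_mem_of_mem_sup_of_mem_normalizer hx hy hz) }
  exact ⟨K, isSolvable_of_lie_mem fun y hy z hz => lie_mem_of_mem_sup_of_mem_normalizer hx hy hz,
    fun y hy => Submodule.mem_sup_right hy,
    Submodule.mem_sup_left (Submodule.mem_span_singleton_self x)⟩

theorem normalizer_eq_self_of_isSolvable_of_maximal (hH : IsSolvable H)
    (hmax : ∀ K : LieSubalgebra R L, IsSolvable K → H ≤ K → K = H) : H.normalizer = H := by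
  refine le_antisymm (fun x hx => ?_) H.le_normalizer
  obtain ⟨K, hK, hHK, hxK⟩ := exists_isSolvable_of_mem_normalizer hx
  exact hmax K hK hHK ▸ hxK

end LieSubalgebra

end Solvable

/-- in a restricted Lie algebra `(g, [p])` over a field of
characteristic `p > 0`, every maximal solvable Lie subalgebra is restricted,
i.e. closed under the `p`-operation.  The restricted structure is encoded via
Jacobson's characterization: the `p`-operation `pOp` is realized as the
associative `p`-th power under a faithful embedding `ι` of `g` into an
associative algebra. -/
theorem maximal_solvable_subalgebra_is_restricted
    {p : ℕ} [Fact p.Prime] {k : Type*} [Field k] [CharP k p]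
    {L : Type*} [LieRing L] [LieAlgebra k L]
    (pOp : L → L)
    (A : Type*) [Ring A] [Algebra k A]
    (ι : L →ₗ⁅k⁆ A) (hι : Function.Injective ι)
    (hp : ∀ x : L, ι (pOp x) = ι x ^ p)
    (b : LieSubalgebra k L) (hb : LieAlgebra.IsSolvable b)
    (hmax : ∀ c : LieSubalgebra k L, LieAlgebra.IsSolvable c → b ≤ c → c = b) :
    ∀ x ∈ b, pOp x ∈ b := by
  intro x hx
  rw [← b.normalizer_eq_self_of_isSolvable_of_maximal hb hmax, b.mem_normalizer_iff]
  intro y hy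
  rw [← ad_apply k, ι.ad_eq_ad_pow_of_map_eq_pow hι (hp x),
    ← LieSubalgebra.coe_ad_pow k L b ⟨x, hx⟩ ⟨y, hy⟩ p]
  exact Subtype.property _
end

section
/- Let g be a Lie algebra over a field and let b be a maximal solvable Lie subalgebra of g. Then b is self-normalizing: the normalizer of b in g equals b. -/
/-! If `x` normalizes `b`, then `k ∙ x ⊔ b` is a Lie subalgebra whose brackets all land in `b`:
it is an extension of the solvable ideal `b` by an abelian quotient, hence solvable, so by
maximality it equals `b` and `x ∈ b`. -/

namespace LieAlgebra

variable {R L : Type*} [CommRing R] [LieRing L] [LieAlgebra R L]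

theorem isSolvable_of_derivedSeries_le_s3 {I : LieIdeal R L} [IsSolvable I] {n : ℕ}
    (h : derivedSeries R L n ≤ I) : IsSolvable L := by
  obtain ⟨m, hm⟩ := (isSolvable_iff R I).mp ‹_›
  refine (isSolvable_iff R L).mpr ⟨m + n, ?_⟩
  rw [derivedSeries_def, derivedSeriesOfIdeal_add]
  exact le_bot_iff.mp ((derivedSeriesOfIdeal_le h le_rfl).trans_eq
    ((LieIdeal.derivedSeries_eq_bot_iff I m).mp hm))

end LieAlgebra

namespace LieSubalgebra

variable {R L : Type*} [CommRing R] [LieRing L] [LieAlgebra R L]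

theorem isSolvable_of_le_of_lie_mem {H K : LieSubalgebra R L} [LieAlgebra.IsSolvable H]
    (hHK : H ≤ K) (hlie : ∀ y ∈ K, ∀ z ∈ K, ⁅y, z⁆ ∈ H) : LieAlgebra.IsSolvable K := by
  obtain ⟨I, hI⟩ : ∃ I : LieIdeal R K, (I : LieSubalgebra R K) = ofLe hHK :=
    (exists_nested_lieIdeal_coe_eq_iff R H hHK).mpr fun y z hy hz => hlie y hy z (hHK hz)
  have : LieAlgebra.IsSolvable I := by
    have := (LieAlgebra.solvable_iff_equiv_solvable (equivOfLe hHK)).mp ‹_›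
    rwa [← hI] at this
  refine LieAlgebra.isSolvable_of_derivedSeries_le_s3 (I := I) (n := 1) ?_
  rw [LieAlgebra.derivedSeries_def, LieAlgebra.derivedSeriesOfIdeal_succ,
    LieAlgebra.derivedSeriesOfIdeal_zero, LieSubmodule.lie_le_iff]
  rintro y - z -
  change ⁅y, z⁆ ∈ (I : LieSubalgebra R K)
  rw [hI, mem_ofLe]
  exact hlie y y.2 z z.2

variable {H : LieSubalgebra R L} {x : L}

def spanSingletonSup (hx : x ∈ H.normalizer) : LieSubalgebra R L :=
  { (R ∙ x) ⊔ (H : Submodule R L) with lie_mem' := lie_mem_sup_of_mem_normalizer hx }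

theorem le_spanSingletonSup (hx : x ∈ H.normalizer) : H ≤ spanSingletonSup hx :=
  fun _ hy => Submodule.mem_sup_right hy

theorem mem_spanSingletonSup (hx : x ∈ H.normalizer) : x ∈ spanSingletonSup hx :=
  Submodule.mem_sup_left (Submodule.mem_span_singleton_self x)

theorem lie_mem_of_mem_spanSingletonSup (hx : x ∈ H.normalizer) {y z : L}
    (hy : y ∈ spanSingletonSup hx) (hz : z ∈ spanSingletonSup hx) : ⁅y, z⁆ ∈ H := by
  obtain ⟨u₁, hu₁, v, hv : v ∈ H, rfl⟩ := Submodule.mem_sup.mp hy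
  obtain ⟨u₂, hu₂, w, hw : w ∈ H, rfl⟩ := Submodule.mem_sup.mp hz
  obtain ⟨t, rfl⟩ := Submodule.mem_span_singleton.mp hu₁
  obtain ⟨s, rfl⟩ := Submodule.mem_span_singleton.mp hu₂
  simp only [add_lie, lie_add, smul_lie, lie_smul, lie_self, smul_zero, zero_add]
  refine H.add_mem (H.smul_mem s ?_) (H.add_mem (H.smul_mem t ?_) (H.lie_mem hv hw))
  exacts [(H.mem_normalizer_iff' x).mp hx v hv, (H.mem_normalizer_iff x).mp hx w hw]

theorem isSolvable_spanSingletonSup [LieAlgebra.IsSolvable H] (hx : x ∈ H.normalizer) :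
    LieAlgebra.IsSolvable (spanSingletonSup hx) :=
  isSolvable_of_le_of_lie_mem (le_spanSingletonSup hx) fun _ hy _ hz =>
    lie_mem_of_mem_spanSingletonSup hx hy hz

end LieSubalgebra

/-- a maximal solvable Lie subalgebra of a Lie algebra over a
field is self-normalizing. -/
theorem maximal_solvable_self_normalizing
    {k : Type*} [Field k] {L : Type*} [LieRing L] [LieAlgebra k L]
    (b : LieSubalgebra k L) (hb : LieAlgebra.IsSolvable b)
    (hmax : ∀ c : LieSubalgebra k L, LieAlgebra.IsSolvable c → b ≤ c → c = b) :
    b.normalizer = b := by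
  refine le_antisymm (fun x hx => ?_) b.le_normalizer
  rw [← hmax _ (LieSubalgebra.isSolvable_spanSingletonSup hx)
    (LieSubalgebra.le_spanSingletonSup hx)]
  exact LieSubalgebra.mem_spanSingletonSup hx
end

section
/- Let k be a field of characteristic p > 0 and A(1) = k[X]/(X^p) with x the image of X. Then the derivation (1+x)∂ of A(1) (sending x to 1+x) satisfies ((1+x)∂)^p = (1+x)∂ as a linear endomorphism of A(1). -/
open Polynomial

set_option synthInstance.maxHeartbeats 1000000
set_option maxHeartbeats 1000000

/-- The truncated polynomial algebra `A(1) = k[X]/(X^p)`. -/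
noncomputable abbrev TruncPolyAlg (k : Type*) [Field k] (p : ℕ) :=
  Polynomial k ⧸ Ideal.span {(X : Polynomial k) ^ p}

/-- The image of `X` in `A(1) = k[X]/(X^p)`. -/
noncomputable abbrev truncX (k : Type*) [Field k] (p : ℕ) : TruncPolyAlg k p :=
  Ideal.Quotient.mk _ (X : Polynomial k)

/-- the derivation `(1+x)∂` of `A(1) = k[X]/(X^p)` (the
derivation sending `x` to `1 + x`) satisfies `((1+x)∂)^p = (1+x)∂` as a
linear endomorphism of `A(1)`. -/
theorem witt_one_add_x_del_is_toral
    {p : ℕ} [Fact p.Prime] {k : Type*} [Field k] [CharP k p]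
    (D : Derivation k (TruncPolyAlg k p) (TruncPolyAlg k p))
    (hD : D (truncX k p) = 1 + truncX k p) :
    D.toLinearMap ^ p = D.toLinearMap := by
  set x := truncX k p with hxdef
  set y : TruncPolyAlg k p := 1 + x with hy
  have hDy : D y = y := by
    rw [hy, map_add, Derivation.map_one_eq_zero, hD, zero_add, ← hy]
  -- D acts on powers of y
  have key : ∀ m : ℕ, D (y ^ m) = m • y ^ m := by
    intro m
    cases m with
    | zero => simp
    | succ m =>
      rw [Derivation.leibniz_pow, hDy]
      simp only [Nat.add_sub_cancel, smul_eq_mul, smul_mul_assoc, ← pow_succ]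
  have iter : ∀ (j m : ℕ), (D.toLinearMap ^ j) (y ^ m) = (m ^ j) • y ^ m := by
    intro j m
    induction j with
    | zero => simp
    | succ j ih =>
      rw [pow_succ', Module.End.mul_apply, ih, map_nsmul]
      show (m ^ j) • D (y ^ m) = _
      rw [key, smul_smul, ← pow_succ]
  -- Fermat's little theorem in k
  have fermat : ∀ m : ℕ, ((m : k)) ^ p = (m : k) := by
    intro m
    have h := map_natCast (frobenius k p) m
    rwa [frobenius_def] at h
  have hkey : ∀ m : ℕ, (D.toLinearMap ^ p) (y ^ m) = D (y ^ m) := by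
    intro m
    rw [iter, key]
    rw [← Nat.cast_smul_eq_nsmul k (m ^ p) (y ^ m), ← Nat.cast_smul_eq_nsmul k m (y ^ m)]
    rw [Nat.cast_pow, fermat]
  -- aeval x f = mk f
  have hx : ∀ f : Polynomial k, aeval x f = Ideal.Quotient.mk _ f := by
    intro f
    have h := Polynomial.aeval_algHom_apply
      (Ideal.Quotient.mkₐ k (Ideal.span {(X : Polynomial k) ^ p})) X f
    simpa using h
  -- surjectivity of aeval y
  have hsurj : Function.Surjective (aeval y : Polynomial k →ₐ[k] TruncPolyAlg k p) := by
    intro a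
    obtain ⟨f, rfl⟩ := Ideal.Quotient.mk_surjective a
    refine ⟨f.comp (X - C 1), ?_⟩
    rw [aeval_comp, map_sub, aeval_X, aeval_C]
    have : y - (algebraMap k _) 1 = x := by
      rw [hy, map_one]; ring
    rw [this, hx]
  refine LinearMap.ext fun a => ?_
  obtain ⟨g, rfl⟩ := hsurj a
  induction g using Polynomial.induction_on' with
  | add u v hu hv => simp only [map_add, hu, hv]
  | monomial n c =>
    rw [aeval_monomial, ← Algebra.smul_def, map_smul, map_smul]
    exact congrArg _ (hkey n)
end

section
/- Let k be an algebraically closed field of characteristic p > 3, and W(1) = Der_k(k[X]/(X^p)). Then b = k·∂ + k·x∂ is a maximal solvable Lie subalgebra of W(1): b is solvable, and any solvable Lie subalgebra of W(1) containing b equals b. -/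
open Polynomial

set_option synthInstance.maxHeartbeats 1000000
set_option maxHeartbeats 1000000

/-!
A derivation `D` of `A = k[X]/(X^p)` is determined by `f = D x`, so `D = f ∂`, and
`⁅∂, f ∂⁆ = f' ∂`. The span `b` of `∂` and `x∂` is a Lie subalgebra with `⁅b, b⁆ ⊆ k ∂`, hence
solvable. If a Lie subalgebra `C ⊇ b` contains some `g(x) ∂ ∉ b`, we may take `2 ≤ deg g < p`;
applying `ad ∂` lowers the degree by one without killing the leading coefficient (the factors
`deg g, deg g - 1, …` are nonzero in `k`), so `C` contains some `g ∂` with `deg g = 2`, and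
subtracting its component in `b` gives `x² ∂ ∈ C`. Then `(-2x∂, ∂, -x²∂)` is an `sl₂`-triple in
`C`; as `2` is invertible, each member of the triple is a multiple of a bracket of two members, so
the triple lies in every term of the derived series of `C`, and `C` is not solvable.
-/

section Lie

variable {R L : Type*} [CommRing R] [LieRing L] [LieAlgebra R L]

theorem lie_smul_add_smul (a b c d : R) (u v : L) :
    ⁅a • u + b • v, c • u + d • v⁆ = (a * d - b * c) • ⁅u, v⁆ := by
  simp only [lie_add, add_lie, lie_smul, smul_lie, lie_self, smul_zero, ← lie_skew v u]
  module

theorem LieAlgebra.isSolvable_of_forall_lie_eq_smul (w : L)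
    (h : ∀ x y : L, ∃ c : R, ⁅x, y⁆ = c • w) : LieAlgebra.IsSolvable L := by
  have hspan : ∀ x ∈ LieAlgebra.derivedSeries R L 1, x ∈ Submodule.span R {w} := by
    intro x hx
    replace hx : x ∈ (LieAlgebra.derivedSeries R L 1).toLieSubalgebra.toSubmodule := hx
    rw [LieAlgebra.coe_derivedSeries_one_eq] at hx
    refine Submodule.span_le.mpr ?_ hx
    rintro _ ⟨x, y, rfl⟩
    obtain ⟨c, hc⟩ := h x y
    exact hc ▸ Submodule.smul_mem _ c (Submodule.mem_span_singleton_self w)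
  have habelian : IsLieAbelian (LieAlgebra.derivedSeries R L 1) := by
    refine ⟨fun x y => Subtype.ext ?_⟩
    obtain ⟨a, ha⟩ := Submodule.mem_span_singleton.mp (hspan x x.2)
    obtain ⟨b, hb⟩ := Submodule.mem_span_singleton.mp (hspan y y.2)
    simp [← ha, ← hb]
  refine LieAlgebra.IsSolvable.mk (R := R) (k := 1 + 1) ?_
  rw [LieAlgebra.derivedSeries_def, LieAlgebra.derivedSeriesOfIdeal_add,
    ← LieAlgebra.derivedSeries_def, ← LieAlgebra.abelian_iff_derived_one_eq_bot]
  exact habelian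

theorem subset_derivedSeries_of_forall_eq_smul_lie (S : Set L)
    (hS : ∀ x ∈ S, ∃ a ∈ S, ∃ b ∈ S, ∃ c : R, x = c • ⁅a, b⁆) (n : ℕ) :
    S ⊆ LieAlgebra.derivedSeries R L n := by
  induction n with
  | zero => exact fun x _ => LieSubmodule.mem_top x
  | succ n ih =>
    intro x hx
    obtain ⟨a, ha, b, hb, c, rfl⟩ := hS x hx
    rw [LieAlgebra.derivedSeries_def, LieAlgebra.derivedSeriesOfIdeal_succ]
    exact Submodule.smul_mem _ c (LieSubmodule.lie_mem_lie (ih ha) (ih hb))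

theorem IsSl2Triple.not_isSolvable {h e f : L} (t : IsSl2Triple h e f) (h2 : IsUnit (2 : R)) :
    ¬ LieAlgebra.IsSolvable L := by
  intro hL
  obtain ⟨n, hn⟩ := (LieAlgebra.isSolvable_iff R L).mp hL
  have hS : ({h, e, f} : Set L) ⊆ LieAlgebra.derivedSeries R L n := by
    refine subset_derivedSeries_of_forall_eq_smul_lie _ ?_ n
    have he : e = h2.unit⁻¹.val • ⁅h, e⁆ := by
      rw [t.lie_h_e_smul R, smul_smul, IsUnit.val_inv_mul, one_smul]
    have hf : f = -h2.unit⁻¹.val • ⁅h, f⁆ := by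
      rw [t.lie_lie_smul_f R, smul_neg, neg_smul, neg_neg, smul_smul, IsUnit.val_inv_mul, one_smul]
    simp only [Set.mem_insert_iff, Set.mem_singleton_iff, forall_eq_or_imp, forall_eq]
    refine ⟨⟨e, by simp, f, by simp, 1, by rw [one_smul, t.lie_e_f]⟩,
      ⟨h, by simp, e, by simp, _, he⟩, ⟨h, by simp, f, by simp, _, hf⟩⟩
  exact t.h_ne_zero ((LieSubmodule.mem_bot _).mp (hn ▸ hS (Set.mem_insert h _)))

namespace LieSubalgebra

def spanPair (u v : L) (huv : ⁅u, v⁆ ∈ Submodule.span R {u, v}) : LieSubalgebra R L where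
  toSubmodule := Submodule.span R {u, v}
  lie_mem' {x y} hx hy := by
    obtain ⟨a, b, rfl⟩ := Submodule.mem_span_pair.mp hx
    obtain ⟨c, d, rfl⟩ := Submodule.mem_span_pair.mp hy
    rw [lie_smul_add_smul]
    exact Submodule.smul_mem _ _ huv

theorem isSolvable_spanPair (u v : L) (huv : ⁅u, v⁆ ∈ Submodule.span R {u, v}) :
    LieAlgebra.IsSolvable (spanPair u v huv) := by
  refine LieAlgebra.isSolvable_of_forall_lie_eq_smul (R := R) ⟨⁅u, v⁆, huv⟩ fun x y => ?_
  obtain ⟨a, b, hx⟩ := Submodule.mem_span_pair.mp x.2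
  obtain ⟨c, d, hy⟩ := Submodule.mem_span_pair.mp y.2
  refine ⟨a * d - b * c, Subtype.ext ?_⟩
  rw [coe_bracket, ← hx, ← hy, lie_smul_add_smul]
  rfl

theorem not_isSolvable_of_isSl2Triple (K : LieSubalgebra R L) {h e f : L}
    (t : IsSl2Triple h e f) (hh : h ∈ K) (he : e ∈ K) (hf : f ∈ K) (h2 : IsUnit (2 : R)) :
    ¬ LieAlgebra.IsSolvable K :=
  IsSl2Triple.not_isSolvable (R := R) (h := ⟨h, hh⟩) (e := ⟨e, he⟩) (f := ⟨f, hf⟩)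
    { h_ne_zero := fun h0 => t.h_ne_zero (congrArg Subtype.val h0)
      lie_e_f := Subtype.ext t.lie_e_f
      lie_h_e_nsmul := Subtype.ext t.lie_h_e_nsmul
      lie_h_f_nsmul := Subtype.ext t.lie_h_f_nsmul } h2

end LieSubalgebra

end Lie

theorem CharP.natCast_ne_zero_of_lt {R : Type*} [AddMonoidWithOne R] {p : ℕ} [CharP R p]
    {n : ℕ} (hn0 : 0 < n) (hnp : n < p) : (n : R) ≠ 0 := by
  rw [Ne, CharP.cast_eq_zero_iff R p]
  exact Nat.not_dvd_of_pos_of_lt hn0 hnp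

theorem Derivation.lie_smul_self {R A : Type*} [CommRing R] [CommRing A] [Algebra R A]
    (D : Derivation R A A) (a : A) : ⁅D, a • D⁆ = D a • D := by
  ext b
  simp only [commutator_apply, smul_apply, leibniz, smul_eq_mul]
  ring

namespace TruncPolyAlg

variable {k : Type*} [Field k] {p : ℕ}

theorem aeval_truncX (g : k[X]) : aeval (truncX k p) g = Ideal.Quotient.mk _ g := by
  rw [truncX, ← Ideal.Quotient.mkₐ_eq_mk k, aeval_algHom_apply, aeval_X_left, AlgHom.id_apply]

theorem aeval_truncX_surjective : Function.Surjective (aeval (R := k) (truncX k p)) := by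
  intro f
  obtain ⟨g, rfl⟩ := Ideal.Quotient.mk_surjective f
  exact ⟨g, aeval_truncX g⟩

theorem adjoin_truncX : Algebra.adjoin k {truncX k p} = ⊤ := by
  rw [Algebra.adjoin_singleton_eq_range_aeval, AlgHom.range_eq_top]
  exact aeval_truncX_surjective

theorem truncX_pow_self : truncX k p ^ p = 0 := by
  rw [← map_pow, Ideal.Quotient.eq_zero_iff_mem]
  exact Ideal.mem_span_singleton_self _

theorem truncX_ne_zero (hp : 1 < p) : truncX k p ≠ 0 := by
  rw [Ne, Ideal.Quotient.eq_zero_iff_mem, Ideal.mem_span_singleton, X_pow_dvd_iff]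
  push Not
  exact ⟨1, hp, by simp⟩

theorem exists_aeval_eq_of_natDegree_lt (hp : 0 < p) (f : TruncPolyAlg k p) :
    ∃ g : k[X], g.natDegree < p ∧ aeval (truncX k p) g = f := by
  obtain ⟨g, rfl⟩ := aeval_truncX_surjective f
  refine ⟨g %ₘ X ^ p, ?_, aeval_modByMonic_eq_self_of_root (by simp [truncX_pow_self])⟩
  have hXp : (X ^ p : k[X]) ≠ 1 := fun h => hp.ne' (by simpa using congrArg natDegree h)
  simpa using natDegree_modByMonic_lt g (monic_X_pow p) hXp

theorem derivation_ext {D E : Derivation k (TruncPolyAlg k p) (TruncPolyAlg k p)}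
    (h : D (truncX k p) = E (truncX k p)) : D = E :=
  Derivation.ext_of_adjoin_eq_top {truncX k p} adjoin_truncX (by simpa using h)

variable {D0 D1 : Derivation k (TruncPolyAlg k p) (TruncPolyAlg k p)}

theorem eq_apply_truncX_smul (hD0 : D0 (truncX k p) = 1)
    (D : Derivation k (TruncPolyAlg k p) (TruncPolyAlg k p)) : D = D (truncX k p) • D0 :=
  derivation_ext (by simp [hD0])

theorem aeval_smul_mem_span_of_natDegree_le_one (hD0 : D0 (truncX k p) = 1)
    (hD1 : D1 (truncX k p) = truncX k p) {g : k[X]} (hg : g.natDegree ≤ 1) :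
    aeval (truncX k p) g • D0 ∈ Submodule.span k {D0, D1} := by
  refine Submodule.mem_span_pair.mpr ⟨g.coeff 0, g.coeff 1, derivation_ext ?_⟩
  conv_rhs => rw [eq_X_add_C_of_natDegree_le_one hg]
  simp [hD0, hD1, add_comm, Algebra.algebraMap_eq_smul_one]

theorem truncX_sq_smul_mem [CharP k p] (hD0 : D0 (truncX k p) = 1)
    (hD1 : D1 (truncX k p) = truncX k p)
    (C : LieSubalgebra k (Derivation k (TruncPolyAlg k p) (TruncPolyAlg k p)))
    (hB : Submodule.span k {D0, D1} ≤ C.toSubmodule) {g : k[X]} (hg2 : 2 ≤ g.natDegree)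
    (hgp : g.natDegree < p) (hg : aeval (truncX k p) g • D0 ∈ C) : truncX k p ^ 2 • D0 ∈ C := by
  obtain ⟨n, hn⟩ : ∃ n, g.natDegree = n := ⟨_, rfl⟩
  rw [hn] at hg2 hgp
  induction n, hg2 using Nat.le_induction generalizing g with
  | base =>
    have hc : g.leadingCoeff ≠ 0 := leadingCoeff_ne_zero.mpr (by rintro rfl; simp at hn)
    have hlow : aeval (truncX k p) g.eraseLead • D0 ∈ C :=
      hB (aeval_smul_mem_span_of_natDegree_le_one hD0 hD1 (by
        have := eraseLead_natDegree_le g; omega))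
    have hsplit : aeval (truncX k p) g • D0 =
        aeval (truncX k p) g.eraseLead • D0 + g.leadingCoeff • (truncX k p ^ 2 • D0) := by
      conv_lhs => rw [← eraseLead_add_C_mul_X_pow g, hn]
      simp [add_smul, mul_smul]
    have hsq : truncX k p ^ 2 • D0 = g.leadingCoeff⁻¹ •
        (aeval (truncX k p) g • D0 - aeval (truncX k p) g.eraseLead • D0) := by
      rw [hsplit, add_sub_cancel_left (G := Derivation k (TruncPolyAlg k p) (TruncPolyAlg k p)),
        inv_smul_smul₀ hc]
    rw [hsq]
    exact C.smul_mem _ (C.sub_mem hg hlow)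
  | succ n hn2 ih =>
    have hcoeff : g.derivative.coeff n ≠ 0 := by
      rw [coeff_derivative]
      refine mul_ne_zero ?_ ?_
      · rw [← hn, coeff_natDegree, Ne, leadingCoeff_eq_zero]
        rintro rfl
        simp at hn
      · exact_mod_cast CharP.natCast_ne_zero_of_lt (n := n + 1) (by omega) hgp
    have hder : g.derivative.natDegree = n :=
      natDegree_eq_of_le_of_coeff_ne_zero (by have := natDegree_derivative_le g; omega) hcoeff
    have hD0C : D0 ∈ C := hB (Submodule.subset_span (Set.mem_insert D0 _))
    have hbracket := C.lie_mem hD0C hg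
    rw [Derivation.lie_smul_self, Derivation.map_aeval, hD0, smul_eq_mul, mul_one] at hbracket
    exact ih hbracket (by omega) hder

theorem lie_eq_left (hD0 : D0 (truncX k p) = 1) (hD1 : D1 (truncX k p) = truncX k p) :
    ⁅D0, D1⁆ = D0 :=
  derivation_ext (by simp [Derivation.commutator_apply, hD0, hD1])

theorem isSl2Triple [CharP k p] (hp : 2 < p) (hD0 : D0 (truncX k p) = 1)
    (hD1 : D1 (truncX k p) = truncX k p) :
    IsSl2Triple ((-2 : k) • D1) D0 (-(truncX k p ^ 2 • D0)) where
  h_ne_zero h0 := by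
    have := congrArg (· (truncX k p)) h0
    simp only [Derivation.smul_apply, hD1, Derivation.zero_apply] at this
    exact smul_ne_zero (neg_ne_zero.mpr (by exact_mod_cast CharP.natCast_ne_zero_of_lt two_pos hp))
      (truncX_ne_zero (by omega)) this
  lie_e_f := derivation_ext (by simp [Derivation.commutator_apply, hD0, hD1, two_smul])
  lie_h_e_nsmul := derivation_ext (by simp [Derivation.commutator_apply, hD0, hD1, two_smul])
  lie_h_f_nsmul := derivation_ext (by simp [Derivation.commutator_apply, hD0, hD1, two_smul]; ring)

end TruncPolyAlg

theorem witt_del_xdel_maximal_solvable_general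
    {p : ℕ} (hp : 3 < p)
    {k : Type*} [Field k] [CharP k p]
    (D0 D1 : Derivation k (TruncPolyAlg k p) (TruncPolyAlg k p))
    (hD0 : D0 (truncX k p) = 1)
    (hD1 : D1 (truncX k p) = truncX k p) :
    ∃ B : LieSubalgebra k (Derivation k (TruncPolyAlg k p) (TruncPolyAlg k p)),
      B.toSubmodule = Submodule.span k {D0, D1} ∧ LieAlgebra.IsSolvable B ∧
      ∀ C : LieSubalgebra k (Derivation k (TruncPolyAlg k p) (TruncPolyAlg k p)),
        LieAlgebra.IsSolvable C → B ≤ C → C = B := by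
  have hD01 : ⁅D0, D1⁆ ∈ Submodule.span k {D0, D1} := by
    rw [TruncPolyAlg.lie_eq_left hD0 hD1]
    exact Submodule.subset_span (Set.mem_insert D0 _)
  refine ⟨LieSubalgebra.spanPair D0 D1 hD01, rfl, LieSubalgebra.isSolvable_spanPair D0 D1 hD01,
    fun C hC hBC => le_antisymm (fun D hD => ?_) hBC⟩
  by_contra hDB
  obtain ⟨g, hgp, hg⟩ := TruncPolyAlg.exists_aeval_eq_of_natDegree_lt (by omega) (D (truncX k p))
  have hDg : D = aeval (truncX k p) g • D0 := hg ▸ TruncPolyAlg.eq_apply_truncX_smul hD0 D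
  have hg2 : 2 ≤ g.natDegree := by
    by_contra! hg1
    exact hDB (hDg ▸ TruncPolyAlg.aeval_smul_mem_span_of_natDegree_le_one hD0 hD1 (by omega))
  have hsq : truncX k p ^ 2 • D0 ∈ C :=
    TruncPolyAlg.truncX_sq_smul_mem hD0 hD1 C hBC hg2 hgp (hDg ▸ hD)
  have h2 : IsUnit (2 : k) := isUnit_iff_ne_zero.mpr <| by
    exact_mod_cast CharP.natCast_ne_zero_of_lt two_pos (by omega : 2 < p)
  exact C.not_isSolvable_of_isSl2Triple (TruncPolyAlg.isSl2Triple (by omega) hD0 hD1)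
    (C.smul_mem _ (hBC (Submodule.subset_span (by simp)))) (hBC (Submodule.subset_span (by simp)))
    (C.neg_mem hsq) h2 hC

/-- for `k` algebraically closed of characteristic `p > 3`,
`b = k·∂ + k·x∂` is a maximal solvable Lie subalgebra of
`W(1) = Der_k(k[X]/(X^p))`: it is a solvable Lie subalgebra and every
solvable Lie subalgebra containing it equals it. -/
theorem witt_del_xdel_maximal_solvable
    {p : ℕ} [Fact p.Prime] (hp : 3 < p)
    {k : Type*} [Field k] [IsAlgClosed k] [CharP k p]
    (D0 D1 : Derivation k (TruncPolyAlg k p) (TruncPolyAlg k p))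
    (hD0 : D0 (truncX k p) = 1)
    (hD1 : D1 (truncX k p) = truncX k p) :
    ∃ B : LieSubalgebra k (Derivation k (TruncPolyAlg k p) (TruncPolyAlg k p)),
      B.toSubmodule = Submodule.span k {D0, D1} ∧ LieAlgebra.IsSolvable B ∧
      ∀ C : LieSubalgebra k (Derivation k (TruncPolyAlg k p) (TruncPolyAlg k p)),
        LieAlgebra.IsSolvable C → B ≤ C → C = B :=
  witt_del_xdel_maximal_solvable_general hp D0 D1 hD0 hD1
end
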